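/- If K ⊆ L are number fields and γ is an algebraic number, then O_L[γ] ∩ K = O_K[γ] ∩ K. -/

import Mathlib

open IntermediateField NumberField IsDedekindDomain

noncomputable section

local notation "Qbar" => AlgebraicClosure ℚ

instance numberField_of_fd (K : IntermediateField ℚ Qbar) [FiniteDimensional ℚ K] :
    NumberField K := ⟨⟩

/-- `K(γ)` as an intermediate field of `Qbar/ℚ`. -/
def adjF (K : IntermediateField ℚ Qbar) (γ : Qbar) : IntermediateField ℚ Qbar :=
  K ⊔ IntermediateField.adjoin ℚ {γ}

instance adjF_fd (K : IntermediateField ℚ Qbar) (γ : Qbar) [FiniteDimensional ℚ K] :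
    FiniteDimensional ℚ (adjF K γ) := by
  have h1 : FiniteDimensional ℚ (IntermediateField.adjoin ℚ ({γ} : Set Qbar)) := by
    apply IntermediateField.finiteDimensional_adjoin
    intro x _
    exact (IsAlgebraic.isIntegral ((AlgebraicClosure.isAlgebraic ℚ).isAlgebraic x))
  exact IntermediateField.finiteDimensional_sup K _

theorem mem_adjF (K : IntermediateField ℚ Qbar) (γ : Qbar) : γ ∈ adjF K γ :=
  le_sup_right (a := K) (IntermediateField.subset_adjoin ℚ {γ} rfl)

/-- γ as an element of K(γ). -/
def adjElt (K : IntermediateField ℚ Qbar) (γ : Qbar) : adjF K γ := ⟨γ, mem_adjF K γ⟩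

/-- the set X(K,γ) -/
def XSet (K : IntermediateField ℚ Qbar) [FiniteDimensional ℚ K] (γ : Qbar) :
    Set (HeightOneSpectrum (𝓞 K)) :=
  {p | ∀ q : HeightOneSpectrum (𝓞 (adjF K γ)),
    q.asIdeal.comap (RingOfIntegers.mapRingHom ((IntermediateField.inclusion (F := adjF K γ) (le_sup_left : K ≤ adjF K γ)) : K →+* adjF K γ))
      = p.asIdeal → 1 < q.valuation (adjF K γ) (adjElt K γ)}

/-- the set Y(K,γ) -/
def YSet (K : IntermediateField ℚ Qbar) [FiniteDimensional ℚ K] (γ : Qbar) :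
    Set (HeightOneSpectrum (𝓞 K)) :=
  {p | ∃ q : HeightOneSpectrum (𝓞 (adjF K γ)),
    q.asIdeal.comap (RingOfIntegers.mapRingHom ((IntermediateField.inclusion (F := adjF K γ) (le_sup_left : K ≤ adjF K γ)) : K →+* adjF K γ))
      = p.asIdeal ∧ 1 < q.valuation (adjF K γ) (adjElt K γ)}

/-- the image of `𝓞 K` in `Qbar`. -/
def OKset (K : IntermediateField ℚ Qbar) : Set Qbar :=
  Set.range (fun a : 𝓞 K => algebraMap K Qbar (algebraMap (𝓞 K) K a))

/-- the subring `O_K[γ]` of `Qbar`. -/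
def OKadj (K : IntermediateField ℚ Qbar) (γ : Qbar) : Subring Qbar :=
  Subring.closure (OKset K ∪ {γ})




open Polynomial in
/-- If `z ∈ A` and `z⁻¹` is integral over a subring `A` of a field, then `z⁻¹ ∈ A`. -/
lemma aux_inv_mem {F : Type*} [Field F] (A : Subring F) {z : F} (hz : z ∈ A)
    (h : IsIntegral A z⁻¹) : z⁻¹ ∈ A := by
  rcases eq_or_ne z 0 with rfl | hz0
  · simpa using A.zero_mem
  obtain ⟨p, hm, hev⟩ := h
  letI : Invertible z⁻¹ :=
    ⟨z, by field_simp, by field_simp⟩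
  have hrev : eval₂ (algebraMap A F) (⅟(z⁻¹)) (reverse p) = 0 :=
    (eval₂_reverse_eq_zero_iff _ _ _).mpr hev
  have hrev' : eval₂ (algebraMap A F) z (reverse p) = 0 := hrev
  have h2 : z * eval₂ (algebraMap A F) z (reverse p).divX + 1 = 0 := by
    have hc : ((reverse p).coeff 0) = 1 := by
      rw [coeff_zero_reverse]; exact hm.leadingCoeff
    calc z * eval₂ (algebraMap A F) z (reverse p).divX + 1
        = eval₂ (algebraMap A F) z (X * (reverse p).divX + C ((reverse p).coeff 0)) := by
          rw [eval₂_add, eval₂_mul, eval₂_X, eval₂_C, hc, map_one]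
      _ = 0 := by rw [X_mul_divX_add]; exact hrev'
  have h3 : z⁻¹ = -(eval₂ (algebraMap A F) z (reverse p).divX) := by
    have : z * (-(eval₂ (algebraMap A F) z (reverse p).divX)) = 1 := by linear_combination -h2
    exact (inv_eq_of_mul_eq_one_right this)
  have he : eval₂ (algebraMap A F) z ((reverse p).divX) ∈ A := by
    have h4 : (Polynomial.aeval z) ((reverse p).divX) ∈ Algebra.adjoin A ({z} : Set F) :=
      Polynomial.aeval_mem_adjoin_singleton _ _
    have h5 : Algebra.adjoin A ({z} : Set F) ≤ ⊥ := Algebra.adjoin_le_iff.mpr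
      (Set.singleton_subset_iff.mpr (Algebra.mem_bot.mpr ⟨⟨z, hz⟩, rfl⟩))
    obtain ⟨a, ha⟩ := Algebra.mem_bot.mp (h5 h4)
    rw [aeval_def] at ha
    rw [← ha]
    exact a.2
  rw [h3]
  exact A.neg_mem he

open Polynomial in
/-- Chevalley-type: a non-integral element over a subring of a field can be excluded from
some valuation subring containing the subring. -/
lemma aux_chevalley {F : Type*} [Field F] (A : Subring F) {x : F} (hx0 : x ≠ 0)
    (h : ¬ IsIntegral A x) :
    ∃ W : ValuationSubring F, A ≤ W.toSubring ∧ x ∉ W := by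
  set B : Subring F := (Algebra.adjoin A ({x⁻¹} : Set F)).toSubring with hB
  have hxB : x⁻¹ ∈ B := Algebra.self_mem_adjoin_singleton A x⁻¹
  have hAB : A ≤ B := fun a ha => (Algebra.adjoin A ({x⁻¹} : Set F)).algebraMap_mem ⟨a, ha⟩
  have hne : Ideal.span {(⟨x⁻¹, hxB⟩ : B)} ≠ ⊤ := by
    intro htop
    have h1 : (1 : B) ∈ Ideal.span {(⟨x⁻¹, hxB⟩ : B)} := htop.symm ▸ Submodule.mem_top
    obtain ⟨b, hb⟩ := Ideal.mem_span_singleton'.mp h1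
    have hb1 : (b : F) * x⁻¹ = 1 := congrArg Subtype.val hb
    obtain ⟨q, hq⟩ : ∃ q : A[X], aeval x⁻¹ q = (b : F) := by
      have hb2 : (b : F) ∈ Algebra.adjoin A ({x⁻¹} : Set F) := b.2
      rw [Algebra.adjoin_singleton_eq_range_aeval] at hb2
      exact hb2
    apply h
    set f : A[X] := X * q - 1 with hf
    have hfev : eval₂ (algebraMap A F) x⁻¹ f = 0 := by
      rw [hf]
      simp only [eval₂_sub, eval₂_mul, eval₂_X, eval₂_one]
      rw [← aeval_def, hq]
      rw [mul_comm] at hb1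
      rw [hb1]; ring
    have hc0 : f.coeff 0 = -1 := by
      rw [hf]
      simp [mul_coeff_zero]
    letI : Invertible (x⁻¹ : F) := ⟨x, by field_simp, by field_simp⟩
    have hrev : eval₂ (algebraMap A F) x (reverse f) = 0 :=
      (eval₂_reverse_eq_zero_iff (algebraMap A F) x⁻¹ f).mpr hfev
    have hfne : f ≠ 0 := fun hz => by simp [hz] at hc0
    have htd : f.natTrailingDegree = 0 := by
      rw [natTrailingDegree_eq_zero]
      exact Or.inr (by rw [hc0]; exact neg_ne_zero.mpr one_ne_zero)
    have hlc : (reverse f).leadingCoeff = -1 := by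
      rw [reverse_leadingCoeff, trailingCoeff, htd, hc0]
    refine ⟨-(reverse f), ?_, ?_⟩
    · rw [Monic, leadingCoeff_neg, hlc, neg_neg]
    · rw [eval₂_neg, hrev, neg_zero]
  obtain ⟨M, hMmax, hMle⟩ := Ideal.exists_le_maximal _ hne
  obtain ⟨W, hW⟩ := (LocalSubring.ofPrime B M).exists_le_valuationSubring
  refine ⟨W, (hAB.trans (LocalSubring.le_ofPrime B M)).trans hW.1, ?_⟩
  intro hxW
  have hloc := hW.2
  have hyM : (⟨x⁻¹, hxB⟩ : B) ∈ M := hMle (Ideal.subset_span rfl)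
  have hnu : ¬ IsUnit (algebraMap B (LocalSubring.ofPrime B M).toSubring ⟨x⁻¹, hxB⟩) := by
    rw [IsLocalization.AtPrime.isUnit_to_map_iff (LocalSubring.ofPrime B M).toSubring M
      (⟨x⁻¹, hxB⟩ : B)]
    exact fun hc => hc hyM
  apply hnu
  apply hloc.map_nonunit
  refine isUnit_iff_exists_inv.mpr ⟨⟨x, hxW⟩, ?_⟩
  ext
  exact inv_mul_cancel₀ hx0

-- monotonicity of IsIntegral along subring inclusions
lemma aux_isIntegral_mono {F : Type*} [CommRing F] {A B : Subring F} (h : A ≤ B) {x : F}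
    (hx : IsIntegral A x) : IsIntegral B x := by
  obtain ⟨p, hm, hev⟩ := hx
  exact ⟨p.map (Subring.inclusion h), hm.map _, by rw [Polynomial.eval₂_map]; exact hev⟩

set_option maxHeartbeats 1000000 in
set_option synthInstance.maxHeartbeats 400000 in
lemma loc_package (K : IntermediateField ℚ Qbar) [FiniteDimensional ℚ K]
    (p : Ideal (𝓞 K)) (hp : p.IsMaximal) :
    ∃ (R : Subring K) (ϖ : K), ϖ ≠ 0 ∧ ϖ ∈ R ∧
      (∀ a : 𝓞 K, algebraMap (𝓞 K) K a ∈ R) ∧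
      (∀ y ∈ R, ∃ a s : 𝓞 K, s ∉ p ∧ y * algebraMap (𝓞 K) K s = algebraMap (𝓞 K) K a) ∧
      (∀ y : K, ∃ n : ℕ, y * ϖ ^ n ∈ R) ∧
      (∀ T : Subring K, R ≤ T → (∃ t ∈ T, t ∉ R) → ϖ⁻¹ ∈ T) := by
  haveI : IsDomain (𝓞 K) := inferInstance
  haveI : IsDedekindDomain (𝓞 K) := inferInstance
  haveI hprime : p.IsPrime := hp.isPrime
  have hpbot : p ≠ ⊥ :=
    Ring.ne_bot_of_isMaximal_of_not_isField hp (RingOfIntegers.not_isField K)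
  haveI hdvr : IsDiscreteValuationRing (Localization.AtPrime p) :=
    @IsDedekindDomainDvr.is_dvr_at_nonzero_prime (𝓞 K) _ inferInstance inferInstance p hpbot hprime
  obtain ⟨π, hπ⟩ := IsDiscreteValuationRing.exists_irreducible (Localization.AtPrime p)
  have hinj : Function.Injective (algebraMap (𝓞 K) K) := IsFractionRing.injective _ _
  have hunit : ∀ s : p.primeCompl, IsUnit (algebraMap (𝓞 K) K s) := by
    intro s
    refine isUnit_iff_ne_zero.mpr fun hc => s.2 ?_
    have hz : (s : 𝓞 K) = 0 := hinj (by rw [hc, map_zero])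
    rw [hz]; exact p.zero_mem
  set φ : Localization.AtPrime p →+* K := IsLocalization.lift hunit with hφdef
  have hφalg : ∀ a : 𝓞 K, φ (algebraMap (𝓞 K) (Localization.AtPrime p) a)
      = algebraMap (𝓞 K) K a := fun a => IsLocalization.lift_eq hunit a
  have htminj : Function.Injective (algebraMap (𝓞 K) (Localization.AtPrime p)) :=
    IsLocalization.injective _ p.primeCompl_le_nonZeroDivisors
  have hφmk : ∀ (a : 𝓞 K) (s : p.primeCompl),
      φ (IsLocalization.mk' (Localization.AtPrime p) a s) * algebraMap (𝓞 K) K s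
      = algebraMap (𝓞 K) K a := by
    intro a s
    rw [← hφalg s, ← map_mul, IsLocalization.mk'_spec, hφalg]
  have hφu : ∀ u : (Localization.AtPrime p)ˣ, φ (u : Localization.AtPrime p) *
      φ ((u⁻¹ : (Localization.AtPrime p)ˣ) : Localization.AtPrime p) = 1 := by
    intro u
    rw [← map_mul, Units.mul_inv, map_one]
  have hφu0 : ∀ u : (Localization.AtPrime p)ˣ, φ (u : Localization.AtPrime p) ≠ 0 := by
    intro u hc
    have h1 := hφu u
    rw [hc, zero_mul] at h1
    exact zero_ne_one h1
  have hπ0 : π ≠ 0 := hπ.ne_zero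
  have hφπ : φ π ≠ 0 := by
    intro hc
    obtain ⟨⟨a, s⟩, (hmk : IsLocalization.mk' (Localization.AtPrime p) a s = π)⟩ := IsLocalization.mk'_surjective p.primeCompl π
    have h1 : φ π * algebraMap (𝓞 K) K s = algebraMap (𝓞 K) K a := by
      rw [← hmk]; exact hφmk a s
    rw [hc, zero_mul] at h1
    have ha : (a : 𝓞 K) = 0 := hinj (by rw [← h1, map_zero])
    have h2 : π * algebraMap (𝓞 K) (Localization.AtPrime p) s = 0 := by
      rw [← hmk, IsLocalization.mk'_spec, ha, map_zero]
    have hs0 : algebraMap (𝓞 K) (Localization.AtPrime p) s ≠ 0 := by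
      intro hc2
      have hz : (s : 𝓞 K) = 0 := htminj (by rw [hc2, map_zero])
      exact s.2 (by rw [hz]; exact p.zero_mem)
    exact hπ0 ((mul_eq_zero.mp h2).resolve_right hs0)
  refine ⟨φ.range, φ π, hφπ, RingHom.mem_range.mpr ⟨π, rfl⟩, fun a => RingHom.mem_range.mpr ⟨algebraMap _ _ a, hφalg a⟩, ?_, ?_, ?_⟩
  · rintro y ⟨ρ, rfl⟩
    obtain ⟨⟨a, s⟩, (hmk : IsLocalization.mk' (Localization.AtPrime p) a s = ρ)⟩ := IsLocalization.mk'_surjective p.primeCompl ρ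
    exact ⟨a, s, s.2, by rw [← hmk]; exact hφmk a s⟩
  · intro y
    obtain ⟨⟨a, s⟩, (hmk : IsLocalization.mk' K a s = y)⟩ := IsLocalization.mk'_surjective (nonZeroDivisors (𝓞 K)) y
    have hy : y * algebraMap (𝓞 K) K s = algebraMap (𝓞 K) K a := by
      rw [← hmk]; exact IsLocalization.mk'_spec K a s
    have hs0 : algebraMap (𝓞 K) (Localization.AtPrime p) (s : 𝓞 K) ≠ 0 := by
      intro hc
      exact nonZeroDivisors.coe_ne_zero s (htminj (by rw [hc, map_zero]))
    obtain ⟨n, u, hsu⟩ := IsDiscreteValuationRing.eq_unit_mul_pow_irreducible hs0 hπ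
    refine ⟨n, RingHom.mem_range.mpr ⟨(algebraMap (𝓞 K) (Localization.AtPrime p) a) *
      ((u⁻¹ : (Localization.AtPrime p)ˣ) : Localization.AtPrime p), ?_⟩⟩
    have h1 : algebraMap (𝓞 K) K s = φ (u : Localization.AtPrime p) * (φ π) ^ n := by
      rw [← hφalg, hsu, map_mul, map_pow]
    have h2 := hφu u
    rw [map_mul, hφalg]
    linear_combination (-(φ ((u⁻¹ : (Localization.AtPrime p)ˣ) : Localization.AtPrime p))) * hy
      + y * φ ((u⁻¹ : (Localization.AtPrime p)ˣ) : Localization.AtPrime p) * h1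
      + y * φ π ^ n * h2
  · rintro T hRT ⟨t, htT, htR⟩
    have ht0 : t ≠ 0 := fun hc => htR (hc ▸ RingHom.mem_range.mpr ⟨0, map_zero φ⟩)
    obtain ⟨⟨a, s⟩, (hmk : IsLocalization.mk' K a s = t)⟩ := IsLocalization.mk'_surjective (nonZeroDivisors (𝓞 K)) t
    have hy : t * algebraMap (𝓞 K) K s = algebraMap (𝓞 K) K a := by
      rw [← hmk]; exact IsLocalization.mk'_spec K a s
    have hsK0 : algebraMap (𝓞 K) K s ≠ 0 := by
      intro hc
      exact nonZeroDivisors.coe_ne_zero s (hinj (by rw [hc, map_zero]))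
    have ha0 : (a : 𝓞 K) ≠ 0 := by
      intro hc
      apply ht0
      have : t * algebraMap (𝓞 K) K s = 0 := by rw [hy, hc, map_zero]
      exact (mul_eq_zero.mp this).resolve_right hsK0
    have ha0' : algebraMap (𝓞 K) (Localization.AtPrime p) (a : 𝓞 K) ≠ 0 :=
      fun hc => ha0 (htminj (by rw [hc, map_zero]))
    have hs0' : algebraMap (𝓞 K) (Localization.AtPrime p) (s : 𝓞 K) ≠ 0 :=
      fun hc => nonZeroDivisors.coe_ne_zero s (htminj (by rw [hc, map_zero]))
    obtain ⟨j, u₁, ha'⟩ := IsDiscreteValuationRing.eq_unit_mul_pow_irreducible ha0' hπ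
    obtain ⟨k, u₂, hs'⟩ := IsDiscreteValuationRing.eq_unit_mul_pow_irreducible hs0' hπ
    have e1 : algebraMap (𝓞 K) K a = φ (u₁ : Localization.AtPrime p) * (φ π) ^ j := by
      rw [← hφalg, ha', map_mul, map_pow]
    have e2 : algebraMap (𝓞 K) K s = φ (u₂ : Localization.AtPrime p) * (φ π) ^ k := by
      rw [← hφalg, hs', map_mul, map_pow]
    have hmain : t * (φ (u₂ : Localization.AtPrime p) * (φ π) ^ k)
        = φ (u₁ : Localization.AtPrime p) * (φ π) ^ j := by
      rw [← e1, ← e2]; exact hy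
    by_cases hjk : k ≤ j
    · exfalso
      apply htR
      obtain ⟨e, rfl⟩ : ∃ e, j = k + e := ⟨j - k, by omega⟩
      refine RingHom.mem_range.mpr ⟨(u₁ : Localization.AtPrime p) *
        ((u₂⁻¹ : (Localization.AtPrime p)ˣ) : Localization.AtPrime p) * π ^ e, ?_⟩
      have hU₂ϖ : φ (u₂ : Localization.AtPrime p) * (φ π) ^ k ≠ 0 :=
        mul_ne_zero (hφu0 u₂) (pow_ne_zero _ hφπ)
      refine mul_right_cancel₀ hU₂ϖ ?_
      rw [map_mul, map_mul, map_pow]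
      linear_combination (-1 : K) * hmain + φ (u₁ : Localization.AtPrime p) * φ π ^ (k + e)
        * hφu u₂
    · push_neg at hjk
      obtain ⟨d, rfl⟩ : ∃ d, k = j + d + 1 := ⟨k - j - 1, by omega⟩
      set c : K := t * (φ π) ^ d *
        (φ ((u₁⁻¹ : (Localization.AtPrime p)ˣ) : Localization.AtPrime p) *
          φ (u₂ : Localization.AtPrime p)) with hc
      have hc_mem : c ∈ T := by
        refine T.mul_mem (T.mul_mem htT (hRT (RingHom.mem_range.mpr ⟨π ^ d, by rw [map_pow]⟩))) (hRT (RingHom.mem_range.mpr ⟨_, map_mul φ _ _⟩))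
      have h5 : φ π * c * (φ (u₁ : Localization.AtPrime p) * (φ π) ^ j)
          = 1 * (φ (u₁ : Localization.AtPrime p) * (φ π) ^ j) := by
        rw [hc]
        linear_combination (φ ((u₁⁻¹ : (Localization.AtPrime p)ˣ) : Localization.AtPrime p) *
          φ (u₁ : Localization.AtPrime p)) * hmain +
          φ (u₁ : Localization.AtPrime p) * φ π ^ j * hφu u₁
      have h6 : φ π * c = 1 :=
        mul_right_cancel₀ (mul_ne_zero (hφu0 u₁) (pow_ne_zero _ hφπ)) h5
      rw [inv_eq_of_mul_eq_one_right h6]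
      exact hc_mem

set_option maxHeartbeats 1000000 in
set_option synthInstance.maxHeartbeats 400000 in
lemma key_lemma (K : IntermediateField ℚ Qbar) [FiniteDimensional ℚ K] (γ : Qbar)
    (x : Qbar) (hxK : x ∈ K) (hint : IsIntegral (OKadj K γ) x)
    (p : Ideal (𝓞 K)) (hp : p.IsMaximal) :
    ∃ s : 𝓞 K, s ∉ p ∧ algebraMap K Qbar (algebraMap (𝓞 K) K s) * x ∈ OKadj K γ := by
  obtain ⟨R, ϖ, hϖ0, hϖR, halgR, hspec, hpow, hsub⟩ := loc_package K p hp
  set ι : K →+* Qbar := algebraMap K Qbar with hι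
  set Ap : Subring Qbar := Subring.closure ((ι '' (R : Set K)) ∪ {γ}) with hAp
  have hOle : OKadj K γ ≤ Ap := by
    apply Subring.closure_mono
    apply Set.union_subset_union_left
    rintro w ⟨a, rfl⟩
    exact ⟨algebraMap (𝓞 K) K a, halgR a, rfl⟩
  have hxAp : IsIntegral Ap x := aux_isIntegral_mono hOle hint
  have hγA : γ ∈ OKadj K γ := Subring.subset_closure (Or.inr rfl)
  have halgA : ∀ a : 𝓞 K, ι (algebraMap (𝓞 K) K a) ∈ OKadj K γ := fun a =>
    Subring.subset_closure (Or.inl ⟨a, rfl⟩)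
  have h1p : (1 : 𝓞 K) ∉ p := fun hc => hp.ne_top (p.eq_top_of_isUnit_mem hc isUnit_one)
  have hsmul : ∀ s₁ s₂ : 𝓞 K, s₁ ∉ p → s₂ ∉ p → s₁ * s₂ ∉ p := by
    intro s₁ s₂ h₁ h₂ hc
    rcases hp.isPrime.mem_or_mem hc with h | h
    exacts [h₁ h, h₂ h]
  -- denominator extraction on Ap
  have hden : ∀ w ∈ Ap, ∃ s : 𝓞 K, s ∉ p ∧ ι (algebraMap (𝓞 K) K s) * w ∈ OKadj K γ := by
    intro w hw
    induction hw using Subring.closure_induction with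
    | mem w hw =>
      rcases hw with ⟨r, hrR, rfl⟩ | hw
      · obtain ⟨a, s, hs, heq⟩ := hspec r hrR
        refine ⟨s, hs, ?_⟩
        have : ι (algebraMap (𝓞 K) K s) * ι r = ι (algebraMap (𝓞 K) K a) := by
          rw [← map_mul, mul_comm, heq]
        rw [this]
        exact halgA a
      · rcases hw with rfl
        exact ⟨1, h1p, by rw [map_one, map_one, one_mul]; exact hγA⟩
    | zero => exact ⟨1, h1p, by rw [mul_zero]; exact (OKadj K γ).zero_mem⟩
    | one => exact ⟨1, h1p, by rw [mul_one, map_one, map_one]; exact (OKadj K γ).one_mem⟩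
    | add w₁ w₂ hw₁ hw₂ ih₁ ih₂ =>
      obtain ⟨s₁, hs₁, hm₁⟩ := ih₁
      obtain ⟨s₂, hs₂, hm₂⟩ := ih₂
      refine ⟨s₁ * s₂, hsmul _ _ hs₁ hs₂, ?_⟩
      have : ι (algebraMap (𝓞 K) K (s₁ * s₂)) * (w₁ + w₂)
          = ι (algebraMap (𝓞 K) K s₂) * (ι (algebraMap (𝓞 K) K s₁) * w₁)
            + ι (algebraMap (𝓞 K) K s₁) * (ι (algebraMap (𝓞 K) K s₂) * w₂) := by
        rw [map_mul, map_mul]; ring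
      rw [this]
      exact (OKadj K γ).add_mem ((OKadj K γ).mul_mem (halgA s₂) hm₁)
        ((OKadj K γ).mul_mem (halgA s₁) hm₂)
    | neg w hw ih =>
      obtain ⟨s, hs, hm⟩ := ih
      exact ⟨s, hs, by rw [mul_neg]; exact (OKadj K γ).neg_mem hm⟩
    | mul w₁ w₂ hw₁ hw₂ ih₁ ih₂ =>
      obtain ⟨s₁, hs₁, hm₁⟩ := ih₁
      obtain ⟨s₂, hs₂, hm₂⟩ := ih₂
      refine ⟨s₁ * s₂, hsmul _ _ hs₁ hs₂, ?_⟩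
      have : ι (algebraMap (𝓞 K) K (s₁ * s₂)) * (w₁ * w₂)
          = (ι (algebraMap (𝓞 K) K s₁) * w₁) * (ι (algebraMap (𝓞 K) K s₂) * w₂) := by
        rw [map_mul, map_mul]; ring
      rw [this]
      exact (OKadj K γ).mul_mem hm₁ hm₂
  set z : Qbar := ι ϖ with hz
  have hz0 : z ≠ 0 := by rw [hz]; exact (map_ne_zero ι).mpr hϖ0
  have hzAp : z ∈ Ap := Subring.subset_closure (Or.inl ⟨ϖ, hϖR, rfl⟩)
  set xK : K := ⟨x, hxK⟩ with hxKdef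
  have hιxK : ι xK = x := rfl
  by_cases hcase : IsIntegral Ap z⁻¹
  · have hzinv : z⁻¹ ∈ Ap := aux_inv_mem Ap hzAp hcase
    have hxAp' : x ∈ Ap := by
      obtain ⟨n, hn⟩ := hpow xK
      have hx' : x = ι (xK * ϖ ^ n) * (z⁻¹) ^ n := by
        rw [map_mul, map_pow, hιxK]
        rw [mul_assoc, ← mul_pow]
        rw [mul_inv_cancel₀ hz0, one_pow, mul_one]
      rw [hx']
      exact Ap.mul_mem (Subring.subset_closure (Or.inl ⟨xK * ϖ ^ n, hn, rfl⟩))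
        (Ap.pow_mem hzinv n)
    exact hden x hxAp'
  · obtain ⟨W, hAW, hzW⟩ := aux_chevalley Ap (inv_ne_zero hz0) hcase
    have hxW : x ∈ W.toSubring :=
      LocalSubring.mem_of_isMax_of_isIntegral W.isMax_toLocalSubring
        (aux_isIntegral_mono hAW hxAp)
    set T : Subring K := W.toSubring.comap ι with hT
    have hRT : R ≤ T := fun r hr => hAW (Subring.subset_closure (Or.inl ⟨r, hr, rfl⟩))
    have hxT : xK ∈ T := by
      rw [hT, Subring.mem_comap]
      exact hxW
    have hxR : xK ∈ R := by
      by_contra hc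
      have hT' : ϖ⁻¹ ∈ T := hsub T hRT ⟨xK, hxT, hc⟩
      rw [hT, Subring.mem_comap, map_inv₀] at hT'
      exact hzW hT'
    obtain ⟨a, s, hs, heq⟩ := hspec _ hxR
    refine ⟨s, hs, ?_⟩
    have : ι (algebraMap (𝓞 K) K s) * x = ι (algebraMap (𝓞 K) K a) := by
      rw [← hιxK, ← map_mul, mul_comm, heq]
    rw [this]
    exact halgA a

set_option maxHeartbeats 1000000 in
set_option synthInstance.maxHeartbeats 400000 in
lemma integral_step (K L : IntermediateField ℚ Qbar) [FiniteDimensional ℚ K]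
    [FiniteDimensional ℚ L] (γ : Qbar) (x : Qbar) (hx : x ∈ OKadj L γ) :
    IsIntegral (OKadj K γ) x := by
  have hγ : γ ∈ OKadj K γ := Subring.subset_closure (Or.inr rfl)
  induction hx using Subring.closure_induction with
  | mem w hw =>
    rcases hw with ⟨b, rfl⟩ | hw
    · have h1 : IsIntegral ℤ (algebraMap (𝓞 L) L b) := RingOfIntegers.isIntegral_coe b
      have h2 : IsIntegral ℤ (algebraMap L Qbar (algebraMap (𝓞 L) L b)) :=
        h1.map (algebraMap L Qbar).toIntAlgHom
      exact h2.tower_top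
    · have hwγ : w = γ := hw
      rw [hwγ]
      exact (isIntegral_algebraMap (x := (⟨γ, hγ⟩ : OKadj K γ)))
  | zero => exact isIntegral_zero
  | one => exact isIntegral_one
  | add w₁ w₂ _ _ ih₁ ih₂ => exact ih₁.add ih₂
  | neg w _ ih => exact ih.neg
  | mul w₁ w₂ _ _ ih₁ ih₂ => exact ih₁.mul ih₂

set_option maxHeartbeats 1000000 in
set_option synthInstance.maxHeartbeats 400000 in
theorem stmt10 (K L : IntermediateField ℚ Qbar) [FiniteDimensional ℚ K] [FiniteDimensional ℚ L]
    (hKL : K ≤ L) (γ : Qbar) :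
    (OKadj L γ : Set Qbar) ∩ (K : Set Qbar) = (OKadj K γ : Set Qbar) ∩ (K : Set Qbar) := by
  apply Set.Subset.antisymm
  · rintro x ⟨hxA, hxK⟩
    refine ⟨?_, hxK⟩
    have hint : IsIntegral (OKadj K γ) x := integral_step K L γ x hxA
    set D : Ideal (𝓞 K) :=
      { carrier := {a | algebraMap K Qbar (algebraMap (𝓞 K) K a) * x ∈ OKadj K γ}
        add_mem' := by
          intro a b ha hb
          simp only [Set.mem_setOf_eq] at *
          have heq : algebraMap K Qbar (algebraMap (𝓞 K) K (a + b)) * x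
              = algebraMap K Qbar (algebraMap (𝓞 K) K a) * x
                + algebraMap K Qbar (algebraMap (𝓞 K) K b) * x := by
            rw [map_add, map_add, add_mul]
          rw [heq]
          exact (OKadj K γ).add_mem ha hb
        zero_mem' := by
          simp only [Set.mem_setOf_eq, map_zero, zero_mul]
          exact (OKadj K γ).zero_mem
        smul_mem' := by
          intro c a ha
          simp only [Set.mem_setOf_eq, smul_eq_mul] at *
          have heq : algebraMap K Qbar (algebraMap (𝓞 K) K (c * a)) * x
              = algebraMap K Qbar (algebraMap (𝓞 K) K c)
                * (algebraMap K Qbar (algebraMap (𝓞 K) K a) * x) := by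
            rw [map_mul, map_mul, mul_assoc]
          rw [heq]
          exact (OKadj K γ).mul_mem (Subring.subset_closure (Or.inl ⟨c, rfl⟩)) ha } with hD
    have hmemD : ∀ a : 𝓞 K, a ∈ D ↔
        algebraMap K Qbar (algebraMap (𝓞 K) K a) * x ∈ OKadj K γ := fun a => Iff.rfl
    by_cases hDtop : D = ⊤
    · have h1 : (1 : 𝓞 K) ∈ D := by rw [hDtop]; exact Submodule.mem_top
      have h2 := (hmemD 1).mp h1
      rwa [map_one, map_one, one_mul] at h2
    · obtain ⟨p, hp, hDp⟩ := Ideal.exists_le_maximal D hDtop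
      obtain ⟨s, hs, hsx⟩ := key_lemma K γ x hxK hint p hp
      exact absurd (hDp ((hmemD s).mpr hsx)) hs
  · rintro x ⟨hxA, hxK⟩
    refine ⟨?_, hxK⟩
    refine Subring.closure_mono ?_ hxA
    apply Set.union_subset_union_left
    rintro w ⟨a, rfl⟩
    have hmem : IsIntegral ℤ ((IntermediateField.inclusion hKL) (algebraMap (𝓞 K) K a)) :=
      (RingOfIntegers.isIntegral_coe a).map (IntermediateField.inclusion hKL).toRingHom.toIntAlgHom
    refine ⟨⟨(IntermediateField.inclusion hKL) (algebraMap (𝓞 K) K a), hmem⟩, ?_⟩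
    rfl
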